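/- arXiv:math/0509702 — 2 statements merged into one kernel-verified Lean document; each statement's English description precedes it below -/
import Mathlib

section
/- Let Ω ⊂ ℝ^d be a bounded measurable set, (z_n) a sequence of measurable functions Ω → ℝ^k with (|z_n|²) uniformly integrable and ‖z_n‖_{L²} bounded, and let α_n > 0 with α_n → 0 and sup_n ‖α_n z_n‖_{L^∞} ≤ R < ∞. Let U : ℝ^k → ℝ be continuous with U(0) = 0. Then ∫_Ω |U(α_n z_n(x))| |z_n(x)|² dx → 0 as n → ∞. -/
/-!
Fix `ε > 0` and choose `η > 0` with `|U y| ≤ ε` for `‖y‖ < η`. Off the set `{‖α_n z_n‖ ≥ η}` the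
integrand is at most `ε ‖z_n‖²`, contributing at most `ε M`. On that set `|U(α_n z_n)|` is bounded
by the maximum `C` of `|U|` on the ball of radius `R`, and by Chebyshev its measure is at most
`α_n² M / η² → 0`, so uniform integrability makes `C ∫ ‖z_n‖²` over it small.
-/

open MeasureTheory Filter Topology

lemma tendsto_zero_of_forall_eventually_le_mul {ι : Type*} {l : Filter ι} {a : ι → ℝ}
    (ha : ∀ i, 0 ≤ a i) {K : ℝ} (hK : 0 < K) (h : ∀ ε > 0, ∀ᶠ i in l, a i ≤ ε * K) :
    Tendsto a l (𝓝 0) := by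
  refine tendsto_order.2 ⟨fun b hb => Eventually.of_forall fun i => hb.trans_le (ha i),
    fun b hb => ?_⟩
  filter_upwards [h (b / (2 * K)) (by positivity)] with i hi
  calc a i ≤ b / (2 * K) * K := hi
    _ = b / 2 := by field_simp
    _ < b := half_lt_self hb

section

variable {X : Type*} [MeasurableSpace X] {μ : Measure X} {Ω : Set X}

lemma tendsto_setIntegral_of_tendsto_measure {f : ℕ → X → ℝ} (hf : ∀ n x, 0 ≤ f n x)
    (hunif : ∀ ε > (0:ℝ), ∃ δ > (0:ℝ), ∀ E ⊆ Ω, MeasurableSet E →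
      μ E < ENNReal.ofReal δ → ∀ n, ∫ x in E, f n x ∂μ < ε)
    {E : ℕ → Set X} (hEΩ : ∀ n, E n ⊆ Ω) (hE : ∀ n, MeasurableSet (E n))
    (hμE : Tendsto (fun n => μ (E n)) atTop (𝓝 0)) :
    Tendsto (fun n => ∫ x in E n, f n x ∂μ) atTop (𝓝 0) := by
  refine tendsto_order.2 ⟨fun b hb => Eventually.of_forall fun n =>
    hb.trans_le (integral_nonneg (hf n)), fun ε hε => ?_⟩
  obtain ⟨δ, hδ, hsmall⟩ := hunif ε hε
  filter_upwards [hμE.eventually (gt_mem_nhds (ENNReal.ofReal_pos.2 hδ))] with n hn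
  exact hsmall (E n) (hEΩ n) (hE n) hn n

lemma measure_setOf_le_norm_inter_le {E : Type*} [NormedAddCommGroup E] {f : X → E}
    (hΩ : MeasurableSet Ω) (hf : IntegrableOn (fun x => ‖f x‖ ^ 2) Ω μ) {η : ℝ} (hη : 0 < η) :
    μ ({x | η ≤ ‖f x‖} ∩ Ω) ≤ ENNReal.ofReal ((∫ x in Ω, ‖f x‖ ^ 2 ∂μ) / η ^ 2) := by
  have hsq : {x | η ≤ ‖f x‖} = {x | η ^ 2 ≤ ‖f x‖ ^ 2} := by
    ext x
    exact (pow_le_pow_iff_left₀ hη.le (norm_nonneg _) two_ne_zero).symm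
  rw [← Measure.restrict_apply' hΩ, hsq,
    ← ofReal_measureReal (hf.measure_ge_lt_top (by positivity)).ne]
  refine ENNReal.ofReal_le_ofReal ((le_div_iff₀ (by positivity)).2 ?_)
  rw [mul_comm]
  exact mul_meas_ge_le_integral_of_nonneg (ae_of_all _ fun _ => by positivity) hf _

lemma tendsto_measure_setOf_le_norm_smul_inter {E : Type*} [NormedAddCommGroup E]
    [NormedSpace ℝ E] {z : ℕ → X → E} (hΩ : MeasurableSet Ω)
    (hz : ∀ n, IntegrableOn (fun x => ‖z n x‖ ^ 2) Ω μ) {M : ℝ}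
    (hM : ∀ n, ∫ x in Ω, ‖z n x‖ ^ 2 ∂μ ≤ M) {α : ℕ → ℝ} (hα : Tendsto α atTop (𝓝 0))
    {η : ℝ} (hη : 0 < η) :
    Tendsto (fun n => μ ({x | η ≤ ‖α n • z n x‖} ∩ Ω)) atTop (𝓝 0) := by
  have hnorm : ∀ n x, ‖α n • z n x‖ ^ 2 = α n ^ 2 * ‖z n x‖ ^ 2 := fun n x => by
    rw [norm_smul, mul_pow, Real.norm_eq_abs, sq_abs]
  have hbound : ∀ n, μ ({x | η ≤ ‖α n • z n x‖} ∩ Ω) ≤ ENNReal.ofReal (α n ^ 2 * M / η ^ 2) := by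
    intro n
    have hint : IntegrableOn (fun x => ‖α n • z n x‖ ^ 2) Ω μ := by
      simp only [hnorm]
      exact (hz n).const_mul (α n ^ 2)
    refine (measure_setOf_le_norm_inter_le hΩ hint hη).trans (ENNReal.ofReal_le_ofReal ?_)
    simp only [hnorm, integral_const_mul]
    gcongr
    exact hM n
  have hlim : Tendsto (fun n => ENNReal.ofReal (α n ^ 2 * M / η ^ 2)) atTop (𝓝 0) := by
    simpa using ENNReal.tendsto_ofReal (((hα.pow 2).mul_const M).div_const (η ^ 2))
  exact tendsto_of_tendsto_of_tendsto_of_le_of_le tendsto_const_nhds hlim (fun _ => bot_le)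
    hbound

lemma integral_abs_mul_le_of_abs_le {u w : X → ℝ} (hw : Integrable w μ) (hw0 : 0 ≤ᵐ[μ] w)
    {A : Set X} (hA : MeasurableSet A) {C ε : ℝ} (hε : 0 ≤ ε) (hC : ∀ᵐ x ∂μ, |u x| ≤ C)
    (hsmall : ∀ᵐ x ∂μ, x ∉ A → |u x| ≤ ε) :
    ∫ x, |u x| * w x ∂μ ≤ C * (∫ x in A, w x ∂μ) + ε * ∫ x, w x ∂μ := by
  have hpoint : (fun x => |u x| * w x) ≤ᵐ[μ] fun x => C * A.indicator w x + ε * w x := by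
    filter_upwards [hw0, hC, hsmall] with x hwx hCx hsx
    by_cases hx : x ∈ A
    · rw [Set.indicator_of_mem hx]
      nlinarith [mul_le_mul_of_nonneg_right hCx hwx, mul_nonneg hε hwx]
    · rw [Set.indicator_of_notMem hx, mul_zero, zero_add]
      exact mul_le_mul_of_nonneg_right (hsx hx) hwx
  have hint : Integrable (fun x => C * A.indicator w x + ε * w x) μ :=
    ((hw.indicator hA).const_mul C).add (hw.const_mul ε)
  calc ∫ x, |u x| * w x ∂μ ≤ ∫ x, C * A.indicator w x + ε * w x ∂μ :=
        integral_mono_of_nonneg (hw0.mono fun x hx => mul_nonneg (abs_nonneg _) hx) hint hpoint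
    _ = C * (∫ x in A, w x ∂μ) + ε * ∫ x, w x ∂μ := by
        rw [integral_add ((hw.indicator hA).const_mul C) (hw.const_mul ε), integral_const_mul,
          integral_const_mul, integral_indicator hA]

end

theorem stmt6_general (d k : ℕ) (Ω : Set (EuclideanSpace ℝ (Fin d)))
    (hΩmeas : MeasurableSet Ω)
    (z : ℕ → EuclideanSpace ℝ (Fin d) → EuclideanSpace ℝ (Fin k))
    (hzint : ∀ n, IntegrableOn (fun x => ‖z n x‖ ^ 2) Ω)
    (hunif : ∀ ε > (0:ℝ), ∃ δ > (0:ℝ), ∀ E ⊆ Ω, MeasurableSet E →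
      volume E < ENNReal.ofReal δ → ∀ n, ∫ x in E, ‖z n x‖ ^ 2 < ε)
    (M : ℝ) (hzbdd : ∀ n, ∫ x in Ω, ‖z n x‖ ^ 2 ≤ M)
    (α : ℕ → ℝ) (hα : Tendsto α atTop (nhds 0))
    (R : ℝ) (hRbdd : ∀ n, ∀ᵐ x ∂(volume.restrict Ω), ‖α n • z n x‖ ≤ R)
    (U : EuclideanSpace ℝ (Fin k) → ℝ) (hU : Continuous U) (hU0 : U 0 = 0) :
    Tendsto (fun n => ∫ x in Ω, |U (α n • z n x)| * ‖z n x‖ ^ 2) atTop (nhds 0) := by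
  obtain ⟨C, hC⟩ := (isCompact_closedBall (0 : EuclideanSpace ℝ (Fin k)) R)
    |>.exists_bound_of_continuousOn hU.continuousOn
  have hM : 0 ≤ M := (integral_nonneg fun _ => by positivity).trans (hzbdd 0)
  refine tendsto_zero_of_forall_eventually_le_mul
    (fun n => integral_nonneg fun _ => by positivity) (by positivity : (0:ℝ) < 1 + M)
    fun ε hε => ?_
  obtain ⟨η, hη, hUη⟩ := Metric.continuousAt_iff.1 (hU.continuousAt (x := 0)) ε hε
  simp only [dist_zero_right, hU0, Real.norm_eq_abs] at hUη
  -- `hunif` only applies to measurable sets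
  set A := fun n => toMeasurable volume ({x | η ≤ ‖α n • z n x‖} ∩ Ω)
  have hA : ∀ n, MeasurableSet (A n) := fun n => measurableSet_toMeasurable _ _
  have hAΩ : Tendsto (fun n => volume (A n ∩ Ω)) atTop (𝓝 0) :=
    tendsto_of_tendsto_of_tendsto_of_le_of_le tendsto_const_nhds
      (tendsto_measure_setOf_le_norm_smul_inter hΩmeas hzint hzbdd hα hη) (fun _ => bot_le)
      fun n => (measure_mono Set.inter_subset_left).trans_eq (measure_toMeasurable _)
  have hbad : Tendsto (fun n => C * ∫ x in A n ∩ Ω, ‖z n x‖ ^ 2) atTop (𝓝 0) := by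
    simpa using (tendsto_setIntegral_of_tendsto_measure (fun n x => by positivity) hunif
      (fun n => Set.inter_subset_right) (fun n => (hA n).inter hΩmeas) hAΩ).const_mul C
  filter_upwards [hbad.eventually (eventually_le_nhds hε)] with n hn
  have hsmall : ∀ᵐ x ∂(volume.restrict Ω), x ∉ A n → |U (α n • z n x)| ≤ ε := by
    filter_upwards [ae_restrict_mem hΩmeas] with x hxΩ hxA
    exact (hUη (not_le.1 fun h => hxA (subset_toMeasurable _ _ ⟨h, hxΩ⟩))).le
  calc ∫ x in Ω, |U (α n • z n x)| * ‖z n x‖ ^ 2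
      ≤ C * (∫ x in A n ∩ Ω, ‖z n x‖ ^ 2) + ε * ∫ x in Ω, ‖z n x‖ ^ 2 := by
        simpa only [Measure.restrict_restrict (hA n)] using
          integral_abs_mul_le_of_abs_le (hzint n) (ae_of_all _ fun _ => by positivity) (hA n)
            hε.le ((hRbdd n).mono fun x hx => by simpa using hC _ (by simpa using hx)) hsmall
    _ ≤ ε + ε * M := add_le_add hn (mul_le_mul_of_nonneg_left (hzbdd n) hε.le)
    _ = ε * (1 + M) := by ring

/-- If `(|z_n|²)` is uniformly integrable and bounded in `L¹`,
`α_n → 0` with `‖α_n z_n‖_{L^∞} ≤ R`, and `U` is continuous with `U(0) = 0`,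
then `∫_Ω |U(α_n z_n)| |z_n|² dx → 0`. -/
theorem stmt6 (d k : ℕ) (Ω : Set (EuclideanSpace ℝ (Fin d)))
    (hΩmeas : MeasurableSet Ω) (hΩbdd : Bornology.IsBounded Ω)
    (z : ℕ → EuclideanSpace ℝ (Fin d) → EuclideanSpace ℝ (Fin k))
    (hzmeas : ∀ n, AEStronglyMeasurable (z n) (volume.restrict Ω))
    (hzint : ∀ n, IntegrableOn (fun x => ‖z n x‖ ^ 2) Ω)
    (hunif : ∀ ε > (0:ℝ), ∃ δ > (0:ℝ), ∀ E ⊆ Ω, MeasurableSet E →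
      volume E < ENNReal.ofReal δ → ∀ n, ∫ x in E, ‖z n x‖ ^ 2 < ε)
    (M : ℝ) (hzbdd : ∀ n, ∫ x in Ω, ‖z n x‖ ^ 2 ≤ M)
    (α : ℕ → ℝ) (hαpos : ∀ n, 0 < α n) (hα : Tendsto α atTop (nhds 0))
    (R : ℝ) (hRbdd : ∀ n, ∀ᵐ x ∂(volume.restrict Ω), ‖α n • z n x‖ ≤ R)
    (U : EuclideanSpace ℝ (Fin k) → ℝ) (hU : Continuous U) (hU0 : U 0 = 0) :
    Tendsto (fun n => ∫ x in Ω, |U (α n • z n x)| * ‖z n x‖ ^ 2) atTop (nhds 0) :=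
  stmt6_general d k Ω hΩmeas z hzint hunif M hzbdd α hα R hRbdd U hU hU0
end

section
/- Let f_n : [0,1] → ℝ be the sequence of Lipschitz functions with f_n(0) = 0 and derivative f_n'(x) = n/√2 when x ∈ [k/(n+1) − 1/n³, k/(n+1) + 1/n³] for some k ∈ {0,1,…,n}, and f_n'(x) = 0 otherwise. Then: (a) ∫_0^1 (f_n'(x))² dx → 1 as n → ∞; (b) for every ε > 0, the measure of the set {x ∈ [0,1] : |f_n'(x)| > ε} tends to 0 as n → ∞, hence f_n' → 0 in measure and the Young measure generated by (f_n') is the Dirac mass at 0. -/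
open MeasureTheory Filter

/-- The derivative `f_n'` in the Ball–Murat-type example of Section 7:
`f_n'(x) = n/√2` on the intervals `[k/(n+1) − 1/n³, k/(n+1) + 1/n³]`,
`k = 0, …, n`, and `0` otherwise. -/
noncomputable def ballMuratDeriv (n : ℕ) (x : ℝ) : ℝ :=
  open Classical in
  if ∃ k : ℕ, k ≤ n ∧ |x - (k : ℝ) / ((n : ℝ) + 1)| ≤ 1 / (n : ℝ) ^ 3 then
    (n : ℝ) / Real.sqrt 2
  else 0

/-!
The derivative is `n/√2` on the union of the `n + 1` balls of radius `r = 1/n³` centred at the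
grid points `k/(n+1)`. For `n ≥ 2` these balls are disjoint, and inside `[0,1]` they have total
length `(2n + 1) r` (only half of the ball at `0` lies in `[0,1]`). Hence
`∫₀¹ (f_n')² = (n²/2)(2n + 1)/n³ = 1 + 1/(2n) → 1`, while `f_n'` vanishes outside a set of
measure `(2n + 1)/n³ → 0`.
-/

open Metric Set

def gridBalls (m : ℕ) (r : ℝ) : Set ℝ :=
  ⋃ k ∈ Finset.range (m + 1), closedBall ((k : ℝ) / (m + 1)) r

lemma measurableSet_gridBalls (m : ℕ) (r : ℝ) : MeasurableSet (gridBalls m r) :=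
  Finset.measurableSet_biUnion _ fun _ _ => measurableSet_closedBall

lemma pairwiseDisjoint_closedBall_grid {d r : ℝ} (hd : 0 < d) (hr : 2 * r < 1 / d) :
    (univ : Set ℕ).PairwiseDisjoint fun k => closedBall ((k : ℝ) / d) r := by
  intro i _ j _ hij
  refine closedBall_disjoint_closedBall ?_
  have hsep : (1 : ℝ) ≤ |(i : ℝ) - j| := by
    exact_mod_cast Int.one_le_abs (sub_ne_zero.2 (Int.natCast_inj.not.2 hij))
  calc r + r < 1 / d := by linarith
    _ ≤ |(i : ℝ) - j| / d := by gcongr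
    _ = dist ((i : ℝ) / d) (j / d) := by
      rw [Real.dist_eq, ← sub_div, abs_div, abs_of_pos hd]

lemma closedBall_grid_subset_Icc {m k : ℕ} {r : ℝ} (hk : 1 ≤ k) (hkm : k ≤ m)
    (hr : r ≤ 1 / (m + 1)) : closedBall ((k : ℝ) / (m + 1)) r ⊆ Icc 0 1 := by
  rw [Real.closedBall_eq_Icc]
  refine Icc_subset_Icc ?_ ?_
  · calc (0 : ℝ) ≤ 1 / (m + 1) - r := by linarith
      _ ≤ k / (m + 1) - r := by gcongr; exact_mod_cast hk
  · calc (k : ℝ) / (m + 1) + r ≤ m / (m + 1) + 1 / (m + 1) := by gcongr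
      _ = 1 := by field_simp

lemma volume_gridBalls_inter_Icc {m : ℕ} {r : ℝ} (hr₀ : 0 ≤ r) (hr : 2 * r < 1 / (m + 1)) :
    volume (gridBalls m r ∩ Icc 0 1) = ENNReal.ofReal ((2 * m + 1) * r) := by
  have hm : (0 : ℝ) < m + 1 := by positivity
  have hr₁ : r ≤ 1 / (m + 1) := by linarith
  have hdisj := (pairwiseDisjoint_closedBall_grid hm hr).subset
    (subset_univ (Finset.range (m + 1) : Set ℕ))
  rw [gridBalls, iUnion₂_inter, measure_biUnion_finset
      (hdisj.mono_on fun _ _ => inter_subset_left)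
      (fun _ _ => measurableSet_closedBall.inter measurableSet_Icc),
    Finset.sum_range_succ']
  have hinner : ∀ k ∈ Finset.range m,
      volume (closedBall (((k + 1 : ℕ) : ℝ) / (m + 1)) r ∩ Icc 0 1) =
        ENNReal.ofReal (2 * r) := by
    intro k hk
    rw [inter_eq_left.2 (closedBall_grid_subset_Icc (Nat.le_add_left 1 k)
      (Finset.mem_range.1 hk) hr₁), Real.volume_closedBall]
  have hzero : closedBall (((0 : ℕ) : ℝ) / (m + 1)) r ∩ Icc 0 1 = Icc 0 r := by
    rw [Nat.cast_zero, zero_div, Real.closedBall_eq_Icc, Icc_inter_Icc, zero_sub, zero_add,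
      max_eq_right (by linarith), min_eq_left (hr₁.trans (div_le_one_of_le₀ (by simp) hm.le))]
  rw [Finset.sum_congr rfl hinner, hzero, Real.volume_Icc, Finset.sum_const, Finset.card_range,
    nsmul_eq_mul, sub_zero, ← ENNReal.ofReal_natCast, ← ENNReal.ofReal_mul (by positivity),
    ← ENNReal.ofReal_add (by positivity) hr₀]
  ring_nf

lemma ballMuratDeriv_eq_indicator (n : ℕ) :
    ballMuratDeriv n =
      (gridBalls n (1 / (n : ℝ) ^ 3)).indicator fun _ => (n : ℝ) / Real.sqrt 2 := by
  classical
  ext x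
  simp only [ballMuratDeriv, indicator_apply, gridBalls, mem_iUnion, Finset.mem_range,
    Nat.lt_succ_iff, mem_closedBall, Real.dist_eq, exists_prop]

lemma setOf_lt_abs_ballMuratDeriv_subset {ε : ℝ} (hε : 0 ≤ ε) (n : ℕ) :
    {x ∈ Icc (0 : ℝ) 1 | ε < |ballMuratDeriv n x|} ⊆
      gridBalls n (1 / (n : ℝ) ^ 3) ∩ Icc 0 1 := by
  refine fun x ⟨hx01, hx⟩ => ⟨?_, hx01⟩
  by_contra hxA
  rw [ballMuratDeriv_eq_indicator, indicator_of_notMem hxA, abs_zero] at hx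
  exact hε.not_gt hx

lemma two_div_cube_lt_one_div_succ {n : ℕ} (hn : 2 ≤ n) :
    2 * (1 / (n : ℝ) ^ 3) < 1 / ((n : ℝ) + 1) := by
  have h2 : (2 : ℝ) ≤ n := by exact_mod_cast hn
  rw [mul_one_div, div_lt_div_iff₀ (by positivity) (by positivity)]
  nlinarith [mul_le_mul h2 h2 (by norm_num) (by linarith)]

lemma volume_support_ballMuratDeriv {n : ℕ} (hn : 2 ≤ n) :
    volume (gridBalls n (1 / (n : ℝ) ^ 3) ∩ Icc 0 1) =
      ENNReal.ofReal ((2 * n + 1) / (n : ℝ) ^ 3) := by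
  rw [volume_gridBalls_inter_Icc (by positivity) (two_div_cube_lt_one_div_succ hn), mul_one_div]

lemma integral_sq_ballMuratDeriv {n : ℕ} (hn : 2 ≤ n) :
    ∫ x in Icc (0 : ℝ) 1, ballMuratDeriv n x ^ 2 = 1 + 1 / (2 * n) := by
  have hn₀ : (n : ℝ) ≠ 0 := by positivity
  have hsq : (fun x => ballMuratDeriv n x ^ 2) =
      (gridBalls n (1 / (n : ℝ) ^ 3)).indicator fun _ => (n : ℝ) ^ 2 / 2 := by
    ext x
    by_cases hx : x ∈ gridBalls n (1 / (n : ℝ) ^ 3)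
    · rw [ballMuratDeriv_eq_indicator, indicator_of_mem hx, indicator_of_mem hx, div_pow,
        Real.sq_sqrt zero_le_two]
    · rw [ballMuratDeriv_eq_indicator, indicator_of_notMem hx, indicator_of_notMem hx,
        zero_pow two_ne_zero]
  rw [hsq, setIntegral_indicator (measurableSet_gridBalls _ _), setIntegral_const,
    measureReal_def, inter_comm, volume_support_ballMuratDeriv hn,
    ENNReal.toReal_ofReal (by positivity), smul_eq_mul]
  field_simp

/-- (a) `∫_0^1 (f_n')² dx → 1`; (b) for every `ε > 0`,
`|{x ∈ [0,1] : |f_n'(x)| > ε}| → 0`, i.e. `f_n' → 0` in measure (so the Young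
measure generated by `(f_n')` is the Dirac mass at `0`). -/
theorem stmt13 :
    Tendsto (fun n => ∫ x in Set.Icc (0:ℝ) 1, (ballMuratDeriv n x) ^ 2) atTop (nhds 1) ∧
    ∀ ε > (0:ℝ),
      Tendsto (fun n => volume {x ∈ Set.Icc (0:ℝ) 1 | ε < |ballMuratDeriv n x|})
        atTop (nhds 0) := by
  have hinv : Tendsto (fun n : ℕ => 1 / (n : ℝ)) atTop (nhds 0) :=
    tendsto_one_div_atTop_nhds_zero_nat
  refine ⟨?_, fun ε hε => ?_⟩
  · have hlim : Tendsto (fun n : ℕ => 1 + 1 / (2 * (n : ℝ))) atTop (nhds 1) := by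
      simpa [one_div, mul_inv, mul_comm] using (hinv.const_mul (1 / 2 : ℝ)).const_add 1
    refine hlim.congr' ?_
    filter_upwards [eventually_ge_atTop 2] with n hn using (integral_sq_ballMuratDeriv hn).symm
  · have hvol : Tendsto (fun n : ℕ => ENNReal.ofReal ((2 * n + 1) / (n : ℝ) ^ 3))
        atTop (nhds 0) := by
      rw [← ENNReal.ofReal_zero]
      refine ENNReal.tendsto_ofReal (Tendsto.congr' ?_ (by
        simpa using ((hinv.pow 2).const_mul 2).add (hinv.pow 3)))
      filter_upwards [eventually_ne_atTop 0] with n hn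
      field_simp
    refine tendsto_of_tendsto_of_tendsto_of_le_of_le' tendsto_const_nhds hvol
      (Eventually.of_forall fun _ => zero_le) ?_
    filter_upwards [eventually_ge_atTop 2] with n hn
    rw [← volume_support_ballMuratDeriv hn]
    exact measure_mono (setOf_lt_abs_ballMuratDeriv_subset hε.le n)
end
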